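/- Let Z be a set, F_0 : ℝ^d × Z → ℝ a measurable function with |F_0(w,z)| ≤ C for all w, z, and λ > 0, β > 0. For a dataset S = (z_1,…,z_n) ∈ Z^n define F_S(w) = (1/n)Σ_{i=1}^n F_0(w,z_i) + (λ/2)‖w‖₂², and let μ_S be the Gibbs probability measure on ℝ^d with density proportional to exp(−β F_S(w)). Suppose S, S' ∈ Z^n differ in exactly one data point and that 4βC/n < 1/2. Then the total variation distance satisfies TV(μ_S, μ_{S'}) ≤ 4βC/n. -/

import Mathlib

open MeasureTheory
open scoped ENNReal

/-- The Gibbs measure on `ℝ^d` with density proportional to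
`exp(−β F_S(w))`, where `F_S(w) = (1/n) Σ_i F₀(w, z_i) + (λ/2)‖w‖²`. -/
noncomputable def gibbsMeasure {Z : Type*} {d n : ℕ}
    (F₀ : EuclideanSpace ℝ (Fin d) → Z → ℝ) (lam β : ℝ) (S : Fin n → Z) :
    Measure (EuclideanSpace ℝ (Fin d)) :=
  (∫⁻ w, ENNReal.ofReal
      (Real.exp (-β * ((∑ i, F₀ w (S i)) / n + lam / 2 * ‖w‖ ^ 2))))⁻¹ •
    MeasureTheory.volume.withDensity fun w =>
      ENNReal.ofReal (Real.exp (-β * ((∑ i, F₀ w (S i)) / n + lam / 2 * ‖w‖ ^ 2)))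

/-! If two measures dominate each other up to a factor `e^ε`, their normalisations dominate each
other up to `e^{2ε}`, and two numbers `p, q ≤ 1` within a factor `e^t` of each other satisfy
`|p - q| ≤ 1 - e^{-t} ≤ t`. The unnormalised Gibbs densities of neighboring datasets are within a
factor `e^{2βC/n}` of each other, because the empirical risks differ in a single term of size at
most `2C/n`. Working in `ℝ≥0∞` avoids any integrability argument: `(ν univ)⁻¹ • ν` is `0` when
the total mass is `0` or `∞`, and the estimates hold in those cases too. -/

lemma sub_le_of_le_exp_mul {p q t : ℝ} (ht : 0 ≤ t) (hp : p ≤ 1)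
    (hpq : p ≤ Real.exp t * q) : p - q ≤ t := by
  have hq : Real.exp (-t) * p ≤ q := by
    rwa [Real.exp_neg, inv_mul_le_iff₀ (Real.exp_pos t)]
  have hexp_le_one : Real.exp (-t) ≤ 1 := Real.exp_le_one_iff.mpr (neg_nonpos.mpr ht)
  calc p - q ≤ p * (1 - Real.exp (-t)) := by linarith
    _ ≤ 1 * (1 - Real.exp (-t)) := mul_le_mul_of_nonneg_right hp (by linarith)
    _ ≤ t := by linarith [Real.add_one_le_exp (-t)]

lemma abs_sub_le_of_le_exp_mul {p q t : ℝ} (ht : 0 ≤ t) (hp : p ≤ 1) (hq : q ≤ 1)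
    (hpq : p ≤ Real.exp t * q) (hqp : q ≤ Real.exp t * p) : |p - q| ≤ t :=
  abs_sub_le_iff.mpr ⟨sub_le_of_le_exp_mul ht hp hpq, sub_le_of_le_exp_mul ht hq hqp⟩

lemma abs_sum_sub_sum_le_two_mul {ι Z : Type*} [Fintype ι] {g : Z → ℝ} {C : ℝ}
    (hg : ∀ z, |g z| ≤ C) {T T' : ι → Z} {i : ι} (hT : ∀ j, j ≠ i → T j = T' j) :
    |∑ j, g (T j) - ∑ j, g (T' j)| ≤ 2 * C := by
  rw [← Finset.sum_sub_distrib,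
    Finset.sum_eq_single i (fun j _ hj => by rw [hT j hj, sub_self]) (by simp)]
  linarith [abs_sub (g (T i)) (g (T' i)), hg (T i), hg (T' i)]

lemma withDensity_le_smul_withDensity {α : Type*} [MeasurableSpace α] (μ : Measure α)
    {f g : α → ℝ≥0∞} {c : ℝ≥0∞} (hc : c ≠ ⊤) (hfg : ∀ x, f x ≤ c * g x) :
    μ.withDensity f ≤ c • μ.withDensity g := by
  rw [← withDensity_smul' c g hc]
  exact withDensity_mono (Filter.Eventually.of_forall hfg)

namespace MeasureTheory.Measure

variable {α : Type*} [MeasurableSpace α]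

noncomputable def normalize (ν : Measure α) : Measure α := (ν Set.univ)⁻¹ • ν

lemma normalize_apply (ν : Measure α) (A : Set α) : normalize ν A = (ν Set.univ)⁻¹ * ν A :=
  rfl

lemma normalize_apply_le_one (ν : Measure α) (A : Set α) : normalize ν A ≤ 1 :=
  calc normalize ν A ≤ (ν Set.univ)⁻¹ * ν Set.univ := by
        rw [normalize_apply]; gcongr; exact Set.subset_univ A
    _ ≤ 1 := ENNReal.inv_mul_le_one _

lemma normalize_apply_le_sq_mul {ν ν' : Measure α} {c : ℝ≥0∞} (hc₀ : c ≠ 0) (hc : c ≠ ⊤)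
    (h : ν ≤ c • ν') (h' : ν' ≤ c • ν) (A : Set α) :
    normalize ν A ≤ c ^ 2 * normalize ν' A := by
  have hinv : (ν Set.univ)⁻¹ ≤ c * (ν' Set.univ)⁻¹ := by
    have : (c * ν Set.univ)⁻¹ ≤ (ν' Set.univ)⁻¹ := ENNReal.inv_le_inv.mpr (h' Set.univ)
    rwa [ENNReal.mul_inv (.inl hc₀) (.inl hc), ENNReal.inv_mul_le_iff hc₀ hc] at this
  calc normalize ν A = (ν Set.univ)⁻¹ * ν A := rfl
    _ ≤ (c * (ν' Set.univ)⁻¹) * (c * ν' A) := mul_le_mul' hinv (h A)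
    _ = c ^ 2 * normalize ν' A := by rw [normalize_apply]; ring

lemma abs_toReal_normalize_sub_le {ν ν' : Measure α} {ε : ℝ} (hε : 0 ≤ ε)
    (h : ν ≤ ENNReal.ofReal (Real.exp ε) • ν') (h' : ν' ≤ ENNReal.ofReal (Real.exp ε) • ν)
    (A : Set α) :
    |(normalize ν A).toReal - (normalize ν' A).toReal| ≤ 2 * ε := by
  have hsq : ENNReal.ofReal (Real.exp ε) ^ 2 = ENNReal.ofReal (Real.exp (2 * ε)) := by
    rw [← ENNReal.ofReal_pow (Real.exp_nonneg ε), ← Real.exp_nat_mul, Nat.cast_ofNat]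
  have toReal_le {μ μ' : Measure α} (hμ : μ ≤ ENNReal.ofReal (Real.exp ε) • μ')
      (hμ' : μ' ≤ ENNReal.ofReal (Real.exp ε) • μ) :
      (normalize μ A).toReal ≤ Real.exp (2 * ε) * (normalize μ' A).toReal := by
    have hle := normalize_apply_le_sq_mul (by simp [Real.exp_pos]) ENNReal.ofReal_ne_top hμ hμ' A
    rw [hsq] at hle
    have hfin : ENNReal.ofReal (Real.exp (2 * ε)) * normalize μ' A ≠ ⊤ :=
      ENNReal.mul_ne_top ENNReal.ofReal_ne_top
        (ne_top_of_le_ne_top ENNReal.one_ne_top (normalize_apply_le_one μ' A))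
    simpa [ENNReal.toReal_mul, Real.exp_nonneg] using ENNReal.toReal_mono hfin hle
  exact abs_sub_le_of_le_exp_mul (by positivity)
    (ENNReal.toReal_le_of_le_ofReal zero_le_one (by simpa using normalize_apply_le_one ν A))
    (ENNReal.toReal_le_of_le_ofReal zero_le_one (by simpa using normalize_apply_le_one ν' A))
    (toReal_le h h') (toReal_le h' h)

end MeasureTheory.Measure

section Gibbs

variable {Z : Type*} {d n : ℕ}

noncomputable def gibbsWeight (F₀ : EuclideanSpace ℝ (Fin d) → Z → ℝ) (lam β : ℝ)
    (S : Fin n → Z) (w : EuclideanSpace ℝ (Fin d)) : ℝ≥0∞ :=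
  ENNReal.ofReal (Real.exp (-β * ((∑ i, F₀ w (S i)) / n + lam / 2 * ‖w‖ ^ 2)))

lemma gibbsMeasure_eq_normalize (F₀ : EuclideanSpace ℝ (Fin d) → Z → ℝ) (lam β : ℝ)
    (S : Fin n → Z) :
    gibbsMeasure F₀ lam β S =
      Measure.normalize (volume.withDensity (gibbsWeight F₀ lam β S)) := by
  rw [Measure.normalize, withDensity_apply', setLIntegral_univ]
  rfl

lemma gibbsWeight_le_exp_mul {F₀ : EuclideanSpace ℝ (Fin d) → Z → ℝ} {C β : ℝ}
    (hFC : ∀ w z, |F₀ w z| ≤ C) (hβ : 0 ≤ β) (lam : ℝ) {S S' : Fin n → Z} {i : Fin n}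
    (hS : ∀ j, j ≠ i → S j = S' j) (w : EuclideanSpace ℝ (Fin d)) :
    gibbsWeight F₀ lam β S w ≤
      ENNReal.ofReal (Real.exp (2 * β * C / n)) * gibbsWeight F₀ lam β S' w := by
  rw [gibbsWeight, gibbsWeight, ← ENNReal.ofReal_mul (Real.exp_nonneg _), ← Real.exp_add]
  refine ENNReal.ofReal_le_ofReal (Real.exp_le_exp.mpr ?_)
  have hsum := (abs_le.mp (abs_sum_sub_sum_le_two_mul (hFC w) hS)).1
  have hdiv : β * (∑ j, F₀ w (S' j) - ∑ j, F₀ w (S j)) / n ≤ 2 * β * C / n :=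
    div_le_div_of_nonneg_right (by nlinarith) n.cast_nonneg
  linarith [show -β * ((∑ j, F₀ w (S j)) / n + lam / 2 * ‖w‖ ^ 2) -
      -β * ((∑ j, F₀ w (S' j)) / n + lam / 2 * ‖w‖ ^ 2) =
      β * (∑ j, F₀ w (S' j) - ∑ j, F₀ w (S j)) / n by ring]

end Gibbs

theorem gibbs_tv_neighboring_bound_general
    {Z : Type*} {d n : ℕ}
    (F₀ : EuclideanSpace ℝ (Fin d) → Z → ℝ)
    (C lam β : ℝ) (hFC : ∀ w z, |F₀ w z| ≤ C) (hβ : 0 < β)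
    (S S' : Fin n → Z)
    (hne : ∃ i, S i ≠ S' i ∧ ∀ j, j ≠ i → S j = S' j) :
    ∀ A : Set (EuclideanSpace ℝ (Fin d)), MeasurableSet A →
      |(gibbsMeasure F₀ lam β S A).toReal - (gibbsMeasure F₀ lam β S' A).toReal| ≤
        4 * β * C / n := by
  intro A _
  obtain ⟨i, -, hS⟩ := hne
  have hC : 0 ≤ C := (abs_nonneg _).trans (hFC 0 (S i))
  have hdom {T T' : Fin n → Z} (hT : ∀ j, j ≠ i → T j = T' j) :=
    withDensity_le_smul_withDensity volume ENNReal.ofReal_ne_top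
      (gibbsWeight_le_exp_mul (d := d) hFC hβ.le lam hT)
  rw [gibbsMeasure_eq_normalize, gibbsMeasure_eq_normalize]
  convert Measure.abs_toReal_normalize_sub_le (by positivity) (hdom hS)
    (hdom fun j hj => (hS j hj).symm) A using 1
  ring

/-- Total variation bound between the Gibbs measures of two neighboring datasets: if
`|F₀| ≤ C`, the datasets `S, S'` differ in exactly one data point, and `4βC/n < 1/2`,
then `TV(μ_S, μ_{S'}) ≤ 4βC/n`, i.e. `|μ_S(A) − μ_{S'}(A)| ≤ 4βC/n` for every
measurable set `A`. -/
theorem gibbs_tv_neighboring_bound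
    {Z : Type*} {d n : ℕ}
    (F₀ : EuclideanSpace ℝ (Fin d) → Z → ℝ)
    (hFmeas : ∀ z, Measurable fun w => F₀ w z)
    (C lam β : ℝ) (hFC : ∀ w z, |F₀ w z| ≤ C) (hlam : 0 < lam) (hβ : 0 < β)
    (S S' : Fin n → Z)
    (hne : ∃ i, S i ≠ S' i ∧ ∀ j, j ≠ i → S j = S' j)
    (hsmall : 4 * β * C / n < 1 / 2) :
    ∀ A : Set (EuclideanSpace ℝ (Fin d)), MeasurableSet A →
      |(gibbsMeasure F₀ lam β S A).toReal - (gibbsMeasure F₀ lam β S' A).toReal| ≤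
        4 * β * C / n :=
  gibbs_tv_neighboring_bound_general F₀ C lam β hFC hβ S S' hne
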